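/- Jensen-type bound: for any θ > 0 and any integrable nonnegative random service rate R, the maximum average arrival rate of the random-service link is at most that of a constant-rate link with the same mean: ρ_r(θ) ≤ ρ_v-formula evaluated at V = E[R]. Concretely, with χ = E[e^{−θR}] and χ̄ = e^{−θE[R]}, we have χ ≥ χ̄, and the map χ ↦ log( (1−(1-β)χ)/((1-α)χ − (1−α−β)χ²) ) is nonincreasing in χ on the domain where the argument is ≥ 1; hence ρ_r(θ) ≤ (β/((α+β)θ))·log( (1−(1-β)χ̄)/((1-α)χ̄ − (1−α−β)χ̄²) ). -/

import Mathlib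

/-!
Jensen's inequality for the convex function `exp` gives `χ̄ ≤ χ`, and both lie in `(0, 1)`.
The ratio `g = N / D` is strictly decreasing there because
`N(x) D(y) - N(y) D(x) = (y - x) ((1 - α) - (1 - α - β) (x + y - (1 - β) x y))` and the last factor
is positive on `(0, 1)²`; since `g > 0` on `(0, 1)` and the
prefactor `β / ((α + β) θ)` is nonnegative, `log ∘ g` carries `χ̄ ≤ χ` to the claimed bound.
-/

open MeasureTheory Set

theorem Real.exp_integral_le_integral_exp {Ω : Type*} [MeasurableSpace Ω] {μ : Measure Ω}
    [IsProbabilityMeasure μ] {f : Ω → ℝ} (hf : Integrable f μ)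
    (hexp : Integrable (fun ω => Real.exp (f ω)) μ) :
    Real.exp (∫ ω, f ω ∂μ) ≤ ∫ ω, Real.exp (f ω) ∂μ :=
  convexOn_exp.map_integral_le Real.continuous_exp.continuousOn isClosed_univ
    (.of_forall fun _ => mem_univ _) hf hexp

noncomputable def rateArg (α β x : ℝ) : ℝ :=
  (1 - (1 - β) * x) / ((1 - α) * x - (1 - α - β) * x ^ 2)

section rateArg

variable {α β x y : ℝ}

lemma rateArg_num_pos (hβ : 0 < β) (hx : x ∈ Ioo 0 1) : 0 < 1 - (1 - β) * x := by
  nlinarith [hx.1, hx.2]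

lemma rateArg_den_pos (hα1 : α < 1) (hβ : 0 < β) (hx : x ∈ Ioo 0 1) :
    0 < (1 - α) * x - (1 - α - β) * x ^ 2 := by
  have hfactor : 0 < (1 - α) * (1 - x) + β * x := by nlinarith [hx.1, hx.2]
  have : (1 - α) * x - (1 - α - β) * x ^ 2 = x * ((1 - α) * (1 - x) + β * x) := by ring
  rw [this]
  exact mul_pos hx.1 hfactor

lemma rateArg_pos (hα1 : α < 1) (hβ : 0 < β) (hx : x ∈ Ioo 0 1) : 0 < rateArg α β x :=
  div_pos (rateArg_num_pos hβ hx) (rateArg_den_pos hα1 hβ hx)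

lemma rateArg_cross_factor_pos (hα1 : α < 1) (hβ : 0 < β) (hαβ : 0 < α + β)
    (hx : x ∈ Ioo 0 1) (hy : y ∈ Ioo 0 1) :
    0 < (1 - α) - (1 - α - β) * (x + y - (1 - β) * x * y) := by
  obtain ⟨hx0, hx1⟩ := hx
  obtain ⟨hy0, hy1⟩ := hy
  rcases le_or_gt (1 - α - β) 0 with hc | hc
  · have hs : 0 < x + y - (1 - β) * x * y := by
      nlinarith [mul_pos hx0 (rateArg_num_pos hβ ⟨hy0, hy1⟩)]
    nlinarith [mul_nonneg (neg_nonneg.2 hc) hs.le]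
  · -- here the factor equals `β (1 - (1 - α - β) x y) + (1 - α - β) (1 - x) (1 - y)`
    have hxy : x * y < 1 := by nlinarith
    nlinarith [mul_pos hβ (show 0 < 1 - (1 - α - β) * (x * y) by nlinarith),
      mul_pos hc (mul_pos (sub_pos.2 hx1) (sub_pos.2 hy1))]

lemma strictAntiOn_rateArg (hα1 : α < 1) (hβ : 0 < β) (hαβ : 0 < α + β) :
    StrictAntiOn (rateArg α β) (Ioo 0 1) := by
  intro x hx y hy hxy
  rw [rateArg, rateArg, div_lt_div_iff₀ (rateArg_den_pos hα1 hβ hy) (rateArg_den_pos hα1 hβ hx)]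
  have hcross : (1 - (1 - β) * x) * ((1 - α) * y - (1 - α - β) * y ^ 2)
      - (1 - (1 - β) * y) * ((1 - α) * x - (1 - α - β) * x ^ 2)
      = (y - x) * ((1 - α) - (1 - α - β) * (x + y - (1 - β) * x * y)) := by ring
  linarith [mul_pos (sub_pos.2 hxy) (rateArg_cross_factor_pos hα1 hβ hαβ hx hy)]

end rateArg

theorem jensen_bound_rho_general
    {Ω : Type*} [MeasurableSpace Ω] (μ : Measure Ω) [IsProbabilityMeasure μ]
    (R : Ω → ℝ)
    (hRint : Integrable R μ) (α β θ : ℝ)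
    (hα : 0 < α) (hα1 : α < 1) (hβ : 0 < β) (hθ : 0 < θ)
    (hint : Integrable (fun ω => Real.exp (-θ * R ω)) μ)
    (hχlt : (∫ ω, Real.exp (-θ * R ω) ∂μ) < 1) :
    let g : ℝ → ℝ := fun x =>
      (1 - (1 - β) * x) / ((1 - α) * x - (1 - α - β) * x ^ 2)
    let χ : ℝ := ∫ ω, Real.exp (-θ * R ω) ∂μ
    let χbar : ℝ := Real.exp (-θ * ∫ ω, R ω ∂μ)
    χbar ≤ χ ∧ StrictAntiOn g (Set.Ioo 0 1) ∧
      (β / ((α + β) * θ)) * Real.log (g χ)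
        ≤ (β / ((α + β) * θ)) * Real.log (g χbar) := by
  intro g χ χbar
  have hjensen : χbar ≤ χ := by
    simpa only [integral_const_mul] using
      Real.exp_integral_le_integral_exp (hRint.const_mul (-θ)) hint
  have hχ : χ ∈ Ioo 0 1 := ⟨(Real.exp_pos _).trans_le hjensen, hχlt⟩
  have hχbar : χbar ∈ Ioo 0 1 := ⟨Real.exp_pos _, hjensen.trans_lt hχlt⟩
  have hanti : StrictAntiOn g (Ioo 0 1) := strictAntiOn_rateArg hα1 hβ (by linarith)
  refine ⟨hjensen, hanti, ?_⟩
  gcongr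
  · exact rateArg_pos hα1 hβ hχ
  · exact hanti.antitoneOn hχbar hχ hjensen

/-- Jensen-type bound: with χ = E[e^{−θR}] and χ̄ = e^{−θE[R]} one has
χ̄ ≤ χ; the map g(x) = (1−(1-β)x)/((1-α)x − (1−α−β)x²) is strictly
decreasing on (0,1); hence the maximum average arrival rate of the random
service link is at most that of a constant-rate link with the same mean:
ρ_r(θ) = (β/((α+β)θ))·log g(χ) ≤ (β/((α+β)θ))·log g(χ̄). -/
theorem jensen_bound_rho
    {Ω : Type*} [MeasurableSpace Ω] (μ : Measure Ω) [IsProbabilityMeasure μ]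
    (R : Ω → ℝ) (hmeas : Measurable R) (hR0 : ∀ᵐ ω ∂μ, 0 ≤ R ω)
    (hRint : Integrable R μ) (α β θ : ℝ)
    (hα : 0 < α) (hα1 : α < 1) (hβ : 0 < β) (hβ1 : β < 1) (hθ : 0 < θ)
    (hint : Integrable (fun ω => Real.exp (-θ * R ω)) μ)
    (hχlt : (∫ ω, Real.exp (-θ * R ω) ∂μ) < 1) :
    let g : ℝ → ℝ := fun x =>
      (1 - (1 - β) * x) / ((1 - α) * x - (1 - α - β) * x ^ 2)
    let χ : ℝ := ∫ ω, Real.exp (-θ * R ω) ∂μ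
    let χbar : ℝ := Real.exp (-θ * ∫ ω, R ω ∂μ)
    χbar ≤ χ ∧ StrictAntiOn g (Set.Ioo 0 1) ∧
      (β / ((α + β) * θ)) * Real.log (g χ)
        ≤ (β / ((α + β) * θ)) * Real.log (g χbar) :=
  jensen_bound_rho_general μ R hRint α β θ hα hα1 hβ hθ hint hχlt
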